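/- Suppose for each j = 1,…,d a Borel measurable function a_j : ℝ → [0,1] is given such that μ̃_j(A) = ∫_A a_j(s) μ_j(ds) for every Borel set A (a_j is the conditional probability a_j(t) = P(T̃ = t, D̃ = j | T = t, D = j); such a density exists since μ̃_j ≤ μ_j). Then for all t ∈ 𝒥, B(t) = P(T̃ < t | T ≥ t) + S(t−)^{-1} Σ_{j=1}^d ∫_{[0,t)} (1 − a_j(s) − B(s)) μ_j(ds), where B(s) = ∫_{[0,s)} S(u)^{-1} μ̃₀(du). (The conditional probability is well defined since S(t−) = P(T ≥ t) ≥ S̃(t) > 0 for t ∈ 𝒥.) -/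

import Mathlib

/-!
Write `F` for the law of `T` and `ν = μ̃₀`, so that `S(u) = F((u, ∞))`. Fubini turns
`∫_{[0,t)} B dF` into `∫_{[0,t)} S(u)⁻¹ F((u,t)) ν(du)`, and since `S(u) = F((u,t)) + S(t−)`
this gives `B(t) S(t−) + ∫_{[0,t)} B dF = ν([0,t))`. The `μ_j` add up to `F` and `a_j` is the
density of `μ̃_j`, so
`∑_j ∫_{[0,t)} (1 - a_j - B) dμ_j = P(T < t) - ∑_{j ≥ 1} μ̃_j([0,t)) - ∫_{[0,t)} B dF`,
while the exit types partition the law of `T̃`: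
`ν([0,t)) + ∑_{j ≥ 1} μ̃_j([0,t)) = P(T̃ < t) = P(T < t) + P(T̃ < t ≤ T)`.
The claim is a linear combination of these identities.
-/

open MeasureTheory Set ENNReal

theorem sum_map_restrict_fiber_eq_map {Ω β γ : Type*} [MeasurableSpace Ω] [MeasurableSpace β]
    [MeasurableSingletonClass β] [MeasurableSpace γ] (P : Measure Ω) {X : Ω → γ} {D : Ω → β}
    (hX : Measurable X) (hD : Measurable D) {s : Finset β} (hDs : ∀ ω, D ω ∈ s) :
    ∑ j ∈ s, (P.restrict {ω | D ω = j}).map X = P.map X := by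
  have hcover : ⋃ j ∈ s, {ω | D ω = j} = univ :=
    eq_univ_of_forall fun ω => mem_biUnion (hDs ω) rfl
  rw [← Measure.map_finset_sum hX.aemeasurable, ← Measure.sum_coe_finset,
    ← Measure.restrict_biUnion_finset (s := fun j => {ω | D ω = j})
      (fun i _ j _ hij => Disjoint.preimage D (disjoint_singleton.2 hij))
      (fun j => hD (measurableSet_singleton j)), hcover, Measure.restrict_univ]

theorem measure_preimage_Ico_eq_add_of_le {Ω : Type*} [MeasurableSpace Ω] {P : Measure Ω}
    {X Y : Ω → ℝ} (hX : Measurable X) (hY : Measurable Y) {a : ℝ}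
    (hXY : ∀ᵐ ω ∂P, a ≤ X ω ∧ X ω ≤ Y ω) (t : ℝ) :
    P (X ⁻¹' Ico a t) = P (Y ⁻¹' Ico a t) + P {ω | X ω < t ∧ t ≤ Y ω} := by
  have hdisj : Disjoint (Y ⁻¹' Ico a t) {ω | X ω < t ∧ t ≤ Y ω} :=
    disjoint_left.2 fun ω h h' => not_le.2 h.2 h'.2
  rw [← measure_union hdisj ((measurableSet_lt hX measurable_const).inter
    (measurableSet_le measurable_const hY))]
  refine measure_congr (Filter.eventuallyEq_set.2 ?_)
  filter_upwards [hXY] with ω hω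
  simp only [mem_preimage, mem_Ico, mem_union, mem_ofPred_eq]
  constructor
  · rintro ⟨-, hXt⟩
    exact (lt_or_ge (Y ω) t).imp (fun hYt => ⟨hω.1.trans hω.2, hYt⟩) fun htY => ⟨hXt, htY⟩
  · rintro (⟨-, hYt⟩ | ⟨hXt, -⟩)
    exacts [⟨hω.1, hω.2.trans_lt hYt⟩, ⟨hω.1, hXt⟩]

theorem lintegral_Ico_lintegral_Ico {F ν : Measure ℝ} [SFinite F] [SFinite ν]
    {f : ℝ → ℝ≥0∞} (hf : Measurable f) (a t : ℝ) :
    ∫⁻ s in Ico a t, ∫⁻ u in Ico a s, f u ∂ν ∂F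
      = ∫⁻ u in Ico a t, f u * F (Ioo u t) ∂ν := by
  have hinner : ∀ s ∈ Ico a t,
      ∫⁻ u in Ico a s, f u ∂ν = ∫⁻ u in Ico a t, (Iio s).indicator f u ∂ν := by
    intro s hs
    rw [lintegral_indicator measurableSet_Iio, Measure.restrict_restrict measurableSet_Iio,
      inter_comm, Ico_inter_Iio, min_eq_right hs.2.le]
  have hmeas : Measurable (Function.uncurry fun s u => (Iio s).indicator f u) := by
    simp only [Function.uncurry_def, indicator_apply, mem_Iio]
    exact Measurable.ite (measurableSet_lt measurable_snd measurable_fst)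
      (hf.comp measurable_snd) measurable_const
  rw [setLIntegral_congr_fun measurableSet_Ico hinner,
    lintegral_lintegral_swap hmeas.aemeasurable]
  refine setLIntegral_congr_fun measurableSet_Ico fun u hu => ?_
  have hslice : ∀ s, (Iio s).indicator f u = (Ioi u).indicator (fun _ => f u) s := fun s => by
    simp only [indicator_apply, mem_Iio, mem_Ioi]
  have hIoo : Ioi u ∩ Ico a t = Ioo u t := by
    ext s
    simp only [mem_inter_iff, mem_Ioi, mem_Ico, mem_Ioo]
    exact ⟨fun h => ⟨h.1, h.2.2⟩, fun h => ⟨h.1, hu.1.trans h.1.le, h.2⟩⟩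
  simp_rw [hslice]
  rw [lintegral_indicator_const measurableSet_Ioi, Measure.restrict_apply measurableSet_Ioi, hIoo]

noncomputable def cumHazard (F ν : Measure ℝ) (s : ℝ) : ℝ≥0∞ :=
  ∫⁻ u in Ico 0 s, (F (Ioi u))⁻¹ ∂ν

theorem cumHazard_mono (F ν : Measure ℝ) : Monotone (cumHazard F ν) :=
  fun _ _ h => lintegral_mono_set (Ico_subset_Ico_right h)

theorem measurable_measure_Ioi (F : Measure ℝ) : Measurable fun u => F (Ioi u) :=
  Antitone.measurable fun _ _ h => measure_mono (Ioi_subset_Ioi h)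

theorem cumHazard_mul_add_lintegral (F ν : Measure ℝ) [IsFiniteMeasure F] [SFinite ν] {t : ℝ}
    (hF : ∀ u ∈ Ico 0 t, F (Ioi u) ≠ 0) :
    cumHazard F ν t * F (Ici t) + ∫⁻ s in Ico 0 t, cumHazard F ν s ∂F = ν (Ico 0 t) := by
  have hmeas : Measurable fun u => (F (Ioi u))⁻¹ := (measurable_measure_Ioi F).inv
  simp only [cumHazard]
  rw [← lintegral_mul_const _ hmeas, lintegral_Ico_lintegral_Ico hmeas,
    ← lintegral_add_left (hmeas.mul_const _), ← setLIntegral_one (μ := ν)]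
  refine setLIntegral_congr_fun measurableSet_Ico fun u hu => ?_
  have hdisj : Disjoint (Ioo u t) (Ici t) := disjoint_left.2 fun s hs h => not_lt.2 h hs.2
  rw [← mul_add, add_comm, ← measure_union hdisj measurableSet_Ici, Ioo_union_Ici_eq_Ioi hu.2]
  exact ENNReal.inv_mul_cancel (hF u hu) (measure_ne_top F _)

theorem setIntegral_one_sub_sub_toReal {α : Type*} [MeasurableSpace α] {μ : Measure α}
    [IsFiniteMeasure μ] {s : Set α} (hs : MeasurableSet s) {a : α → ℝ} {g : α → ℝ≥0∞}
    {c : ℝ≥0∞} (ha : Measurable a) (ha0 : ∀ x, 0 ≤ a x) (ha1 : ∀ x, a x ≤ 1)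
    (hg : Measurable g) (hc : c ≠ ⊤) (hgc : ∀ x ∈ s, g x ≤ c) :
    ∫ x in s, (1 - a x - (g x).toReal) ∂μ
      = (μ s).toReal - (∫⁻ x in s, ENNReal.ofReal (a x) ∂μ).toReal
        - (∫⁻ x in s, g x ∂μ).toReal := by
  have hgc_ae : ∀ᵐ x ∂μ.restrict s, g x ≤ c := ae_restrict_of_forall_mem hs hgc
  have ha_int : Integrable a (μ.restrict s) :=
    Integrable.of_bound ha.aestronglyMeasurable 1 (ae_of_all _ fun x => by
      rw [Real.norm_of_nonneg (ha0 x)]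
      exact ha1 x)
  have hg_int : Integrable (fun x => (g x).toReal) (μ.restrict s) :=
    Integrable.of_bound hg.ennreal_toReal.aestronglyMeasurable c.toReal (hgc_ae.mono fun x hx => by
      rw [Real.norm_of_nonneg toReal_nonneg]
      exact toReal_mono hc hx)
  have h1a_int : Integrable (fun x => 1 - a x) (μ.restrict s) := (integrable_const 1).sub ha_int
  rw [integral_sub h1a_int hg_int, integral_sub (integrable_const 1) ha_int, setIntegral_const,
    smul_eq_mul, mul_one, measureReal_def,
    integral_eq_lintegral_of_nonneg_ae (ae_of_all _ ha0) ha.aestronglyMeasurable,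
    integral_toReal hg.aemeasurable (hgc_ae.mono fun x hx => hx.trans_lt hc.lt_top)]

theorem sum_setIntegral_one_sub_sub_toReal {ι α : Type*} [MeasurableSpace α] {s : Finset ι}
    {μ ν : ι → Measure α} [∀ j, IsFiniteMeasure (μ j)] {A : Set α} (hA : MeasurableSet A)
    {a : ι → α → ℝ} (ha : ∀ j, Measurable (a j)) (ha_range : ∀ j x, 0 ≤ a j x ∧ a j x ≤ 1)
    (hν : ∀ j ∈ s, ν j A = ∫⁻ x in A, ENNReal.ofReal (a j x) ∂(μ j))
    {g : α → ℝ≥0∞} {c : ℝ≥0∞} (hg : Measurable g) (hc : c ≠ ⊤) (hgc : ∀ x ∈ A, g x ≤ c) :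
    ∑ j ∈ s, ∫ x in A, (1 - a j x - (g x).toReal) ∂(μ j)
      = ((∑ j ∈ s, μ j) A).toReal - (∑ j ∈ s, ν j A).toReal
        - (∫⁻ x in A, g x ∂(∑ j ∈ s, μ j)).toReal := by
  have hterm : ∀ j ∈ s, ∫ x in A, (1 - a j x - (g x).toReal) ∂(μ j)
      = (μ j A).toReal - (ν j A).toReal - (∫⁻ x in A, g x ∂(μ j)).toReal := fun j hj => by
    rw [setIntegral_one_sub_sub_toReal hA (ha j) (fun x => (ha_range j x).1)
      (fun x => (ha_range j x).2) hg hc hgc, hν j hj]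
  have hν_ne_top : ∀ j ∈ s, ν j A ≠ ⊤ := fun j hj => by
    rw [hν j hj]
    exact ne_top_of_le_ne_top (measure_ne_top (μ j) A)
      ((setLIntegral_mono' hA fun x _ => ofReal_le_one.2 (ha_range j x).2).trans_eq
        (setLIntegral_one A))
  have hg_ne_top : ∀ j ∈ s, ∫⁻ x in A, g x ∂(μ j) ≠ ⊤ := fun j _ =>
    ne_top_of_le_ne_top (mul_ne_top hc (measure_ne_top (μ j) A))
      ((setLIntegral_mono' hA hgc).trans_eq (setLIntegral_const A c))
  rw [Finset.sum_congr rfl hterm, Finset.sum_sub_distrib, Finset.sum_sub_distrib,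
    ← toReal_sum fun j _ => measure_ne_top _ _, ← toReal_sum hν_ne_top, ← toReal_sum hg_ne_top,
    Measure.finsetSum_apply]
  simp_rw [← lintegral_indicator hA]
  rw [lintegral_finsetSum_measure]

theorem toReal_cumHazard_eq {ι : Type*} {s : Finset ι} {F ν : Measure ℝ} [IsFiniteMeasure F]
    [SFinite ν] {μ ν' : ι → Measure ℝ} [∀ j, IsFiniteMeasure (μ j)] (hμ : ∑ j ∈ s, μ j = F)
    {a : ι → ℝ → ℝ} (ha : ∀ j, Measurable (a j)) (ha_range : ∀ j x, 0 ≤ a j x ∧ a j x ≤ 1)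
    {t : ℝ} (hν' : ∀ j ∈ s, ν' j (Ico 0 t) = ∫⁻ x in Ico 0 t, ENNReal.ofReal (a j x) ∂(μ j))
    (hF : ∀ u ∈ Ico 0 t, F (Ioi u) ≠ 0) (hFt : F (Ici t) ≠ 0) {Q : ℝ≥0∞} (hQ : Q ≠ ⊤)
    (hbal : ν (Ico 0 t) + ∑ j ∈ s, ν' j (Ico 0 t) = F (Ico 0 t) + Q) :
    (cumHazard F ν t).toReal
      = (Q / F (Ici t)).toReal + (F (Ici t)).toReal⁻¹
        * ∑ j ∈ s, ∫ x in Ico 0 t, (1 - a j x - (cumHazard F ν x).toReal) ∂(μ j) := by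
  have key := cumHazard_mul_add_lintegral F ν hF
  have hbal_ne_top : ν (Ico 0 t) + ∑ j ∈ s, ν' j (Ico 0 t) ≠ ⊤ :=
    hbal ▸ add_ne_top.2 ⟨measure_ne_top F _, hQ⟩
  have hν_ne_top : ν (Ico 0 t) ≠ ⊤ := (add_ne_top.1 hbal_ne_top).1
  have hB_ne_top : cumHazard F ν t ≠ ⊤ := fun h => by
    have := key ▸ hν_ne_top
    simp [h, top_mul hFt] at this
  have hI_ne_top := (add_ne_top.1 (key ▸ hν_ne_top)).2
  have hkey := congrArg ENNReal.toReal key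
  have hbal' := congrArg ENNReal.toReal hbal
  rw [toReal_add (mul_ne_top hB_ne_top (measure_ne_top _ _)) hI_ne_top, toReal_mul] at hkey
  rw [toReal_add hν_ne_top (add_ne_top.1 hbal_ne_top).2, toReal_add (measure_ne_top _ _) hQ]
    at hbal'
  rw [sum_setIntegral_one_sub_sub_toReal measurableSet_Ico ha ha_range hν'
      (cumHazard_mono F ν).measurable hB_ne_top fun x hx => cumHazard_mono F ν hx.2.le,
    hμ, toReal_div]
  have hFt' : (F (Ici t)).toReal ≠ 0 := toReal_ne_zero.2 ⟨hFt, measure_ne_top _ _⟩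
  field_simp
  linarith

theorem B_vs_prob_general
    {Ω : Type*} [m0 : MeasurableSpace Ω] (P : Measure Ω) [IsProbabilityMeasure P]
    (d : ℕ)
    (T Tt : Ω → ℝ) (D Dt : Ω → ℕ)
    (hT : Measurable T) (hTt : Measurable Tt)
    (hD : Measurable D) (hDt : Measurable Dt)
    (hpos : ∀ᵐ ω ∂P, 0 < Tt ω ∧ Tt ω ≤ T ω)
    (hDrange : ∀ ω, 1 ≤ D ω ∧ D ω ≤ d)
    (hDtrange : ∀ ω, Dt ω ≤ d)
    (μ μt : ℕ → Measure ℝ)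
    (hμ : ∀ j, μ j = Measure.map T (P.restrict {ω | D ω = j}))
    (hμt : ∀ j, μt j = Measure.map Tt (P.restrict {ω | Dt ω = j}))
    (𝒥 : Set ℝ) (h𝒥 : 𝒥 = {t | 0 ≤ t ∧ 0 < P {ω | t < Tt ω}})
    -- the densities a_j of μ̃_j with respect to μ_j
    (a : ℕ → ℝ → ℝ)
    (ha_meas : ∀ j, Measurable (a j))
    (ha_range : ∀ j s, 0 ≤ a j s ∧ a j s ≤ 1)
    (ha : ∀ j, 1 ≤ j → j ≤ d → ∀ A : Set ℝ, MeasurableSet A →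
      μt j A = ∫⁻ s in A, ENNReal.ofReal (a j s) ∂(μ j))
    -- B(s) = ∫_{[0,s)} S(u)⁻¹ μ̃₀(du)
    (B : ℝ → ℝ≥0∞)
    (hB : ∀ s, B s = ∫⁻ u in Ico 0 s, (P {ω | u < T ω})⁻¹ ∂(μt 0)) :
    ∀ t ∈ 𝒥,
      (B t).toReal
        = (P {ω | Tt ω < t ∧ t ≤ T ω} / P {ω | t ≤ T ω}).toReal
          + ((P {ω | t ≤ T ω}).toReal)⁻¹
            * ∑ j ∈ Finset.Icc 1 d,
                ∫ s in Ico (0:ℝ) t, (1 - a j s - (B s).toReal) ∂(μ j) := by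
  subst h𝒥
  rintro t ⟨-, hJ⟩
  have hF : ∀ A, MeasurableSet A → P.map T A = P (T ⁻¹' A) := fun A hA => Measure.map_apply hT hA
  have hFt : P.map T (Ici t) = P {ω | t ≤ T ω} := hF _ measurableSet_Ici
  have hB_eq : B = cumHazard (P.map T) (μt 0) := funext fun s => by
    simp only [hB, cumHazard, hF _ measurableSet_Ioi]
    rfl
  have hsurv_ne : ∀ u ≤ t, P.map T (Ioi u) ≠ 0 := fun u hu => by
    rw [hF _ measurableSet_Ioi]
    refine (hJ.trans_le (measure_mono_ae ?_)).ne'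
    exact hpos.mono fun ω hω h => hu.trans_lt (h.trans_le hω.2)
  have : ∀ j, IsFiniteMeasure (μ j) := fun j => hμ j ▸ inferInstance
  have : IsFiniteMeasure (μt 0) := hμt 0 ▸ inferInstance
  have hμ_sum : ∑ j ∈ Finset.Icc 1 d, μ j = P.map T := by
    simp_rw [hμ]
    exact sum_map_restrict_fiber_eq_map P hT hD fun ω => Finset.mem_Icc.2 (hDrange ω)
  have hμt_sum : ∑ j ∈ insert 0 (Finset.Icc 1 d), μt j = P.map Tt := by
    simp_rw [hμt]
    refine sum_map_restrict_fiber_eq_map P hTt hDt fun ω => ?_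
    rw [Finset.mem_insert, Finset.mem_Icc]
    have := hDtrange ω
    omega
  have hbal : μt 0 (Ico 0 t) + ∑ j ∈ Finset.Icc 1 d, μt j (Ico 0 t)
      = P.map T (Ico 0 t) + P {ω | Tt ω < t ∧ t ≤ T ω} := by
    rw [← Finset.sum_insert (f := fun j => μt j (Ico 0 t)) (by simp),
      ← Measure.finsetSum_apply, hμt_sum,
      Measure.map_apply hTt measurableSet_Ico, hF _ measurableSet_Ico]
    exact measure_preimage_Ico_eq_add_of_le hTt hT (hpos.mono fun ω hω => ⟨hω.1.le, hω.2⟩) t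
  rw [hB_eq, ← hFt]
  refine toReal_cumHazard_eq hμ_sum ha_meas ha_range
    (fun j hj => ha j (Finset.mem_Icc.1 hj).1 (Finset.mem_Icc.1 hj).2 _ measurableSet_Ico)
    (fun u hu => hsurv_ne u hu.2.le) ?_ (measure_ne_top _ _) hbal
  exact fun h => hsurv_ne t le_rfl (measure_mono_null Ioi_subset_Ici_self h)

/-- Appendix identity (eq. (B_vs_prob)):
`B(t) = P(T̃ < t | T ≥ t) + S(t−)⁻¹ Σ_{j=1}^d ∫_{[0,t)} (1 − a_j(s) − B(s)) μ_j(ds)`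
for all `t ∈ 𝒥`. -/
theorem B_vs_prob
    {Ω : Type*} [m0 : MeasurableSpace Ω] (P : Measure Ω) [IsProbabilityMeasure P]
    (d : ℕ) (hd : 1 ≤ d)
    (T Tt : Ω → ℝ) (D Dt : Ω → ℕ)
    (hT : Measurable T) (hTt : Measurable Tt)
    (hD : Measurable D) (hDt : Measurable Dt)
    (hpos : ∀ᵐ ω ∂P, 0 < Tt ω ∧ Tt ω ≤ T ω)
    (hDrange : ∀ ω, 1 ≤ D ω ∧ D ω ≤ d)
    (hDtrange : ∀ ω, Dt ω ≤ d)
    (hDD : ∀ᵐ ω ∂P, Dt ω = if Tt ω = T ω then D ω else 0)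
    (μ μt : ℕ → Measure ℝ)
    (hμ : ∀ j, μ j = Measure.map T (P.restrict {ω | D ω = j}))
    (hμt : ∀ j, μt j = Measure.map Tt (P.restrict {ω | Dt ω = j}))
    (𝒥 : Set ℝ) (h𝒥 : 𝒥 = {t | 0 ≤ t ∧ 0 < P {ω | t < Tt ω}})
    -- the densities a_j of μ̃_j with respect to μ_j
    (a : ℕ → ℝ → ℝ)
    (ha_meas : ∀ j, Measurable (a j))
    (ha_range : ∀ j s, 0 ≤ a j s ∧ a j s ≤ 1)
    (ha : ∀ j, 1 ≤ j → j ≤ d → ∀ A : Set ℝ, MeasurableSet A →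
      μt j A = ∫⁻ s in A, ENNReal.ofReal (a j s) ∂(μ j))
    -- B(s) = ∫_{[0,s)} S(u)⁻¹ μ̃₀(du)
    (B : ℝ → ℝ≥0∞)
    (hB : ∀ s, B s = ∫⁻ u in Ico 0 s, (P {ω | u < T ω})⁻¹ ∂(μt 0)) :
    ∀ t ∈ 𝒥,
      (B t).toReal
        = (P {ω | Tt ω < t ∧ t ≤ T ω} / P {ω | t ≤ T ω}).toReal
          + ((P {ω | t ≤ T ω}).toReal)⁻¹
            * ∑ j ∈ Finset.Icc 1 d,
                ∫ s in Ico (0:ℝ) t, (1 - a j s - (B s).toReal) ∂(μ j) :=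
  B_vs_prob_general (m0 := m0) P d T Tt D Dt hT hTt hD hDt hpos hDrange hDtrange μ μt hμ hμt 𝒥 h𝒥 a
    ha_meas ha_range ha B hB
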